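/- arXiv:0809.1411 — 3 statements merged into one kernel-verified Lean document; each statement's English description precedes it below -/
import Mathlib

section
/- For every integer N ≥ 2, the number of finite sequences (α₁,…,α_l) of integers with l ≥ 1 and α_i ≥ 2 for all i such that the determinant of T(α₁,…,α_l) equals N is exactly Euler's totient function Φ(N), i.e. the number of invertible elements of the ring ℤ/Nℤ. -/
/-!
Expanding along the first row gives the continuant recurrence
`det T(a, b, …) = a · det T(b, …) - det T(…)`. Writing `p = det T(α₁, …, α_l)` and
`q = det T(α₂, …, α_l)`, it shows by induction that `1 ≤ q < p` and `IsCoprime p q` when all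
`αᵢ ≥ 2`. Conversely the recurrence is one step of the Euclidean algorithm with the quotient
rounded up, `α₁ = p / q + 1`, so the pair `(p, q)` determines the sequence and every coprime
pair `1 ≤ q < p` arises. Hence `α ↦ q` is a bijection onto the residues coprime to `N = p`.
-/

/-- The symmetric tridiagonal matrix with diagonal entries `α 0, …, α (n-1)` and
all sub- and superdiagonal entries equal to `1`. -/
def Tmat {R : Type*} [CommRing R] {n : ℕ} (α : Fin n → R) : Matrix (Fin n) (Fin n) R :=
  Matrix.of fun i j =>
    if (i : ℕ) = (j : ℕ) then α i
    else if (i : ℕ) + 1 = (j : ℕ) ∨ (j : ℕ) + 1 = (i : ℕ) then 1 else 0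

/-- The determinant of the tridiagonal matrix associated to a finite sequence. -/
def detT {R : Type*} [CommRing R] (L : List R) : R := (Tmat L.get).det

open Matrix

section Determinant

variable {R : Type*} [CommRing R]

lemma Tmat_submatrix_succ_succ {n : ℕ} (α : Fin (n + 1) → R) :
    (Tmat α).submatrix Fin.succ Fin.succ = Tmat (α ∘ Fin.succ) := by
  ext i j
  simp [Tmat]

lemma det_Tmat_submatrix_succ_succAbove_one {n : ℕ} (α : Fin (n + 2) → R) :
    ((Tmat α).submatrix Fin.succ (Fin.succAbove 1)).det = (Tmat fun i => α i.succ.succ).det := by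
  have hcol : Fin.succAbove 1 ∘ Fin.succ = Fin.succ ∘ (Fin.succ : Fin n → Fin (n + 1)) := by
    ext j
    simp [Fin.succAbove, Fin.lt_def]
  have hminor : (Tmat α).submatrix (Fin.succ ∘ Fin.succ) (Fin.succ ∘ Fin.succ) =
      Tmat fun i => α i.succ.succ := by
    ext i j
    simp [Tmat]
  have hcorner : Tmat α 1 0 = 1 := by simp [Tmat]
  -- the first column of this minor is `(1, 0, …, 0)`
  rw [det_succ_column_zero, Fin.sum_univ_succ, Finset.sum_eq_zero]
  · simp [hcol, hminor, hcorner]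
  · intro i _
    simp [Tmat]

lemma det_Tmat_succ_succ {n : ℕ} (α : Fin (n + 2) → R) :
    (Tmat α).det = α 0 * (Tmat (α ∘ Fin.succ)).det - (Tmat fun i => α i.succ.succ).det := by
  have hdiag : Tmat α 0 0 = α 0 := by simp [Tmat]
  have hsuper : Tmat α 0 1 = 1 := by simp [Tmat]
  rw [det_succ_row_zero, Fin.sum_univ_succ, Fin.sum_univ_succ, Finset.sum_eq_zero]
  · simp [hdiag, hsuper, Tmat_submatrix_succ_succ, det_Tmat_submatrix_succ_succAbove_one,
      sub_eq_add_neg]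
  · intro j _
    simp [Tmat]

@[simp]
lemma detT_nil : detT ([] : List R) = 1 :=
  det_fin_zero

@[simp]
lemma detT_singleton (a : R) : detT [a] = a := by
  simp [detT, Tmat]

lemma detT_cons_cons (a b : R) (L : List R) :
    detT (a :: b :: L) = a * detT (b :: L) - detT L :=
  det_Tmat_succ_succ _

lemma isCoprime_detT_detT_tail : ∀ L : List R, IsCoprime (detT L) (detT L.tail)
  | [] => by simpa using isCoprime_one_left
  | [a] => by simpa using isCoprime_one_right
  | a :: b :: L => by
    rw [List.tail_cons, detT_cons_cons]
    simpa [sub_eq_add_neg, mul_comm] using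
      ((isCoprime_detT_detT_tail (b :: L)).symm.neg_left).add_mul_left_left a

end Determinant

lemma detT_tail_mem_Ico : ∀ {L : List ℤ}, L ≠ [] → (∀ x ∈ L, 2 ≤ x) →
    detT L.tail ∈ Set.Ico 1 (detT L)
  | [a], _, h => by simpa [Int.lt_iff_add_one_le] using h a (by simp)
  | a :: b :: L, _, h => by
    simp only [List.forall_mem_cons] at h
    obtain ⟨ha, hb, hL⟩ := h
    obtain ⟨h1, h2⟩ := detT_tail_mem_Ico (L := b :: L) (by simp) (List.forall_mem_cons.2 ⟨hb, hL⟩)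
    simp only [List.tail_cons, Set.mem_Ico] at h1 h2 ⊢
    rw [detT_cons_cons]
    constructor <;> nlinarith

lemma one_lt_detT {L : List ℤ} (hL : L ≠ []) (h : ∀ x ∈ L, 2 ≤ x) : 1 < detT L :=
  (detT_tail_mem_Ico hL h).1.trans_lt (detT_tail_mem_Ico hL h).2

lemma head_eq_detT_ediv_add_one {a b : ℤ} {L : List ℤ} (h : ∀ x ∈ a :: b :: L, 2 ≤ x) :
    a = detT (a :: b :: L) / detT (b :: L) + 1 := by
  obtain ⟨h1, h2⟩ := detT_tail_mem_Ico (L := b :: L) (by simp) fun x hx => h x (by simp [hx])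
  simp only [List.tail_cons] at h1 h2
  have hdecomp : detT (a :: b :: L) = (detT (b :: L) - detT L) + (a - 1) * detT (b :: L) := by
    rw [detT_cons_cons]; ring
  rw [hdecomp, Int.add_mul_ediv_right _ _ (by omega), Int.ediv_eq_zero_of_lt (by omega) (by omega)]
  ring

lemma eq_of_detT_eq_of_detT_tail_eq : ∀ {L L' : List ℤ}, L ≠ [] → L' ≠ [] →
    (∀ x ∈ L, 2 ≤ x) → (∀ x ∈ L', 2 ≤ x) →
    detT L = detT L' → detT L.tail = detT L'.tail → L = L'
  | [a], [a'], _, _, _, _, hdet, _ => by simpa using hdet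
  | [a], a' :: b' :: L', _, _, _, h', _, htail => by
    have := one_lt_detT (L := b' :: L') (by simp) fun x hx => h' x (by simp [hx])
    simp_all
  | a :: b :: L, [a'], _, _, h, _, _, htail => by
    have := one_lt_detT (L := b :: L) (by simp) fun x hx => h x (by simp [hx])
    simp_all
  | a :: b :: L, a' :: b' :: L', _, _, h, h', hdet, htail => by
    simp only [List.tail_cons] at htail
    have hhead : a = a' := by
      rw [head_eq_detT_ediv_add_one h, head_eq_detT_ediv_add_one h', hdet, htail]
    have htail' : detT L = detT L' := by
      rw [detT_cons_cons, detT_cons_cons, hhead, htail] at hdet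
      linarith
    rw [hhead, eq_of_detT_eq_of_detT_tail_eq (by simp) (by simp) (fun x hx => h x (by simp [hx]))
      (fun x hx => h' x (by simp [hx])) htail (by simpa using htail')]

lemma exists_detT_eq_and_detT_tail_eq {p q : ℤ} (hq : 1 ≤ q) (hqp : q < p) (hpq : IsCoprime p q) :
    ∃ L : List ℤ, L ≠ [] ∧ (∀ x ∈ L, 2 ≤ x) ∧ detT L = p ∧ detT L.tail = q := by
  rcases hq.eq_or_lt with rfl | hq
  · exact ⟨[p], by simp, by simpa [Int.lt_iff_add_one_le] using hqp, by simp, by simp⟩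
  have hrem : p % q ≠ 0 := by
    intro h0
    have := Int.isUnit_iff.1 (hpq.isUnit_of_dvd' (Int.dvd_of_emod_eq_zero h0) dvd_rfl)
    omega
  have hdiv := Int.mul_ediv_add_emod p q
  have hrem_lt := Int.emod_lt_of_pos p (by omega : 0 < q)
  have hrem_nonneg := Int.emod_nonneg p (by omega : q ≠ 0)
  have hquot : 1 ≤ p / q := (Int.le_ediv_iff_mul_le (by omega)).2 (by omega)
  obtain ⟨a, ha⟩ : ∃ a, a = p / q + 1 := ⟨_, rfl⟩
  have hnext : a * q - p = q - p % q := by rw [ha]; linear_combination hdiv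
  have hq'q : IsCoprime q (a * q - p) := by
    simpa [sub_eq_add_neg, add_comm, mul_comm] using hpq.symm.neg_right.add_mul_left_right a
  obtain ⟨_ | ⟨b, M⟩, hM, hM2, hMdet, hMtail⟩ :=
    exists_detT_eq_and_detT_tail_eq (p := q) (q := a * q - p) (by omega) (by omega) hq'q
  · exact absurd rfl hM
  refine ⟨a :: b :: M, by simp, ?_, ?_, by simpa using hMdet⟩
  · exact List.forall_mem_cons.2 ⟨by omega, hM2⟩
  · rw [detT_cons_cons, hMdet, show detT M = a * q - p by simpa using hMtail]
    ring
termination_by q.toNat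
decreasing_by omega

lemma bijOn_detT_tail (p : ℤ) :
    Set.BijOn (fun L => detT L.tail) {L : List ℤ | L ≠ [] ∧ (∀ x ∈ L, 2 ≤ x) ∧ detT L = p}
      {q | 1 ≤ q ∧ q < p ∧ IsCoprime p q} := by
  refine ⟨?_, ?_, ?_⟩
  · rintro L ⟨hL, h, rfl⟩
    exact ⟨(detT_tail_mem_Ico hL h).1, (detT_tail_mem_Ico hL h).2, isCoprime_detT_detT_tail L⟩
  · rintro L ⟨hL, h, hdet⟩ L' ⟨hL', h', hdet'⟩ htail
    exact eq_of_detT_eq_of_detT_tail_eq hL hL' h h' (hdet.trans hdet'.symm) htail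
  · rintro q ⟨hq, hqp, hpq⟩
    obtain ⟨L, hL, h, hdet, htail⟩ := exists_detT_eq_and_detT_tail_eq hq hqp hpq
    exact ⟨L, ⟨hL, h, hdet⟩, htail⟩

lemma ncard_coprime_Ico_eq_totient {N : ℕ} (hN : N ≠ 1) :
    {q : ℤ | 1 ≤ q ∧ q < N ∧ IsCoprime (N : ℤ) q}.ncard = N.totient := by
  have hcast : {q : ℤ | 1 ≤ q ∧ q < N ∧ IsCoprime (N : ℤ) q} =
      (Nat.cast : ℕ → ℤ) '' {m | m < N ∧ N.Coprime m} := by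
    ext q
    constructor
    · rintro ⟨hq, hqN, hcop⟩
      lift q to ℕ using by omega
      refine ⟨q, ⟨by omega, Nat.isCoprime_iff_coprime.1 hcop⟩, rfl⟩
    · rintro ⟨m, ⟨hm, hcop⟩, rfl⟩
      have : m ≠ 0 := by rintro rfl; exact hN (Nat.coprime_zero_right _ |>.1 hcop)
      exact ⟨by omega, by omega, Nat.isCoprime_iff_coprime.2 hcop⟩
  rw [hcast, Set.ncard_image_of_injective _ Nat.cast_injective, Nat.totient_eq_card_lt_and_coprime,
    Nat.card_coe_set_eq]

theorem stmt0 (N : ℕ) (hN : 2 ≤ N) :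
    {L : List ℤ | L ≠ [] ∧ (∀ x ∈ L, 2 ≤ x) ∧ detT L = (N : ℤ)}.ncard = Nat.totient N := by
  rw [(bijOn_detT_tail N).ncard_eq, ncard_coprime_Ico_eq_totient (by omega)]
end

section
/- Let α₁,…,α_l be a sequence of l ≥ 1 real numbers with α_i ≥ 2 for all i, and write M(α₁)M(α₂)⋯M(α_l) as the 2×2 real matrix with rows (−a,−b) and (c,d). Then 0 ≤ a < min(b,c), max(b,c) < d, and c − a ≤ d − b. -/
/-!
Writing a product as `!![-a, -b; c, d]`, multiplying on the left by `M(x)` turns `(a, b, c, d)`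
into `(c, d, x c - a, x d - b)`. The inequalities of the theorem, strengthened by `b < d` and
`c < d`, hold for a single factor `M(x) = !![-0, -1; 1, x]` and are preserved by this step when
`x ≥ 2`; the crucial one is `b - a ≤ d - c`, which yields `b - a < x (d - c)`, the new `c < d`.
-/
/-- The matrix `M(α) = !![0, -1; 1, α]`. -/
def Mmat {R : Type*} [CommRing R] (a : R) : Matrix (Fin 2) (Fin 2) R := !![0, -1; 1, a]

structure ProdBounds {R : Type*} [Ring R] [PartialOrder R] (a b c d : R) : Prop where
  nonneg : 0 ≤ a
  lt_b : a < b
  lt_c : a < c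
  b_lt : b < d
  c_lt : c < d
  sub_le_sub : c - a ≤ d - b

theorem Mmat_mul {R : Type*} [CommRing R] (x a b c d : R) :
    Mmat x * !![-a, -b; c, d] = !![-c, -d; x * c - a, x * d - b] := by
  ext i j
  fin_cases i <;> fin_cases j <;> simp [Mmat] <;> ring

section

variable {R : Type*} [CommRing R] [LinearOrder R] [IsStrictOrderedRing R]

theorem prodBounds_Mmat {x : R} (hx : 2 ≤ x) : ProdBounds 0 1 1 x where
  nonneg := le_rfl
  lt_b := one_pos
  lt_c := one_pos
  b_lt := by linarith
  c_lt := by linarith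
  sub_le_sub := by linarith

theorem ProdBounds.Mmat_mul {a b c d x : R} (h : ProdBounds a b c d) (hx : 2 ≤ x) :
    ProdBounds c d (x * c - a) (x * d - b) where
  nonneg := h.nonneg.trans h.lt_c.le
  lt_b := h.c_lt
  lt_c := by nlinarith [h.nonneg, h.lt_c]
  b_lt := by nlinarith [h.nonneg, h.lt_b, h.b_lt]
  c_lt := by nlinarith [h.lt_b, h.c_lt, h.sub_le_sub]
  sub_le_sub := by nlinarith [h.c_lt, h.sub_le_sub]

theorem exists_prodBounds_prod_map_Mmat (L : List R) (hL : L ≠ []) (h2 : ∀ x ∈ L, 2 ≤ x) :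
    ∃ a b c d : R, (L.map Mmat).prod = !![-a, -b; c, d] ∧ ProdBounds a b c d := by
  induction L, hL using List.recNeNil with
  | singleton x =>
    refine ⟨0, 1, 1, x, ?_, prodBounds_Mmat (h2 x (by simp))⟩
    simp [Mmat]
  | cons x xs _ ih =>
    obtain ⟨a, b, c, d, hprod, hbounds⟩ := ih fun y hy ↦ h2 y (by simp [hy])
    refine ⟨c, d, x * c - a, x * d - b, ?_, hbounds.Mmat_mul (h2 x (by simp))⟩
    rw [List.map_cons, List.prod_cons, hprod, Mmat_mul]

end

theorem stmt4 (L : List ℝ) (hL : L ≠ []) (h2 : ∀ x ∈ L, 2 ≤ x) (a b c d : ℝ)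
    (h : (L.map Mmat).prod = !![-a, -b; c, d]) :
    0 ≤ a ∧ a < min b c ∧ max b c < d ∧ c - a ≤ d - b := by
  obtain ⟨a', b', c', d', hprod, hbounds⟩ := exists_prodBounds_prod_map_Mmat L hL h2
  rw [hprod] at h
  obtain ⟨rfl, rfl, rfl, rfl⟩ : a' = a ∧ b' = b ∧ c' = c ∧ d' = d := by
    simpa [← Matrix.ext_iff, Fin.forall_fin_two, and_assoc] using h
  exact ⟨hbounds.nonneg, lt_min hbounds.lt_b hbounds.lt_c, max_lt hbounds.b_lt hbounds.c_lt,
    hbounds.sub_le_sub⟩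
end

section
/- The subgroup of SL₂(ℤ) generated by the matrices M(2), M(3), M(4), … is all of SL₂(ℤ). -/
/-- The matrix `M(α) = !![0, -1; 1, α]` as an element of `SL₂(ℤ)`. -/
def Msl (a : ℤ) : Matrix.SpecialLinearGroup (Fin 2) ℤ :=
  ⟨!![0, -1; 1, a], by simp [Matrix.det_fin_two_of]⟩

/-! Since `M(a) = S Tᵃ`, the quotient `M(2)⁻¹ M(3)` is `T` and `M(2) T⁻²` is `S`; these two
matrices generate `SL₂(ℤ)`. -/

open Matrix ModularGroup

lemma Msl_eq_S_mul_T_zpow (a : ℤ) : Msl a = S * T ^ a := by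
  ext i j
  simp only [Msl, Matrix.SpecialLinearGroup.coe_mul, coe_S, coe_T_zpow]
  fin_cases i <;> fin_cases j <;> simp [Matrix.mul_apply, Fin.sum_univ_two]

lemma T_eq_Msl_inv_mul_Msl (a : ℤ) : T = (Msl a)⁻¹ * Msl (a + 1) := by
  rw [Msl_eq_S_mul_T_zpow, Msl_eq_S_mul_T_zpow]
  group

lemma S_eq_Msl_mul_T_zpow (a : ℤ) : S = Msl a * T ^ (-a) := by
  rw [Msl_eq_S_mul_T_zpow]
  group

theorem stmt11 :
    Subgroup.closure {A : Matrix.SpecialLinearGroup (Fin 2) ℤ | ∃ a : ℤ, 2 ≤ a ∧ A = Msl a}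
      = ⊤ := by
  set H := Subgroup.closure {A : Matrix.SpecialLinearGroup (Fin 2) ℤ | ∃ a : ℤ, 2 ≤ a ∧ A = Msl a}
  have hM : ∀ a : ℤ, 2 ≤ a → Msl a ∈ H := fun a ha => Subgroup.subset_closure ⟨a, ha, rfl⟩
  have hT : T ∈ H := by
    rw [T_eq_Msl_inv_mul_Msl 2]
    exact mul_mem (inv_mem (hM 2 le_rfl)) (hM 3 (by norm_num))
  have hS : S ∈ H := by
    rw [S_eq_Msl_mul_T_zpow 2]
    exact mul_mem (hM 2 le_rfl) (zpow_mem hT _)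
  rw [eq_top_iff, ← SpecialLinearGroup.SL2Z_generators, Subgroup.closure_le]
  exact Set.insert_subset hS (Set.singleton_subset_iff.mpr hT)
end
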